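/- The (I,J)-torsion submodule of M equals the union over all ideals a in W̃(I,J) of the annihilator submodules (0 :_M a); that is, Γ_{I,J}(M) = {x ∈ M : there exists a ∈ W̃(I,J) with a·x = 0}. -/

import Mathlib

open CategoryTheory

noncomputable section

variable {R : Type} [CommRing R]

/-- `W(I,J)`: primes `p` with `I^t ⊆ J + p` for some `t > 0`. -/
def PairW (I J : Ideal R) : Set (PrimeSpectrum R) :=
  {p | ∃ t : ℕ, 0 < t ∧ I ^ t ≤ J + p.asIdeal}

/-- `W̃(I,J)`: ideals `a` with `I^t ⊆ J + a` for some `t > 0`. -/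
def PairWTilde (I J : Ideal R) : Set (Ideal R) :=
  {a | ∃ t : ℕ, 0 < t ∧ I ^ t ≤ J + a}

lemma PairWTilde.mul_mem {I J a b : Ideal R}
    (ha : a ∈ PairWTilde I J) (hb : b ∈ PairWTilde I J) : a * b ∈ PairWTilde I J := by
  obtain ⟨t1, ht1, hta⟩ := ha
  obtain ⟨t2, ht2, htb⟩ := hb
  refine ⟨t1 + t2, by omega, ?_⟩
  have h1 : (J + a) * (J + b) = J * J + J * b + a * J + a * b := by ring
  calc I ^ (t1 + t2) = I ^ t1 * I ^ t2 := pow_add I t1 t2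
    _ ≤ (J + a) * (J + b) := Ideal.mul_mono hta htb
    _ ≤ J + a * b := by
        rw [h1]
        simp only [Ideal.add_eq_sup]
        exact sup_le (sup_le (sup_le (le_sup_of_le_left Ideal.mul_le_right)
          (le_sup_of_le_left Ideal.mul_le_left)) (le_sup_of_le_left Ideal.mul_le_right))
          le_sup_right

/-- The `(I,J)`-torsion submodule `Γ_{I,J}(M)` (characterized via annihilators). -/
def pairTorsion (I J : Ideal R) (M : Type) [AddCommGroup M] [Module R M] :
    Submodule R M where
  carrier := {x | ∃ a ∈ PairWTilde I J, ∀ r ∈ a, r • x = 0}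
  zero_mem' := ⟨I, ⟨1, one_pos, by rw [pow_one, Ideal.add_eq_sup]; exact le_sup_right⟩,
    fun r _ => smul_zero r⟩
  add_mem' := by
    rintro x y ⟨a, ha, hax⟩ ⟨b, hb, hby⟩
    refine ⟨a * b, PairWTilde.mul_mem ha hb, fun r hr => ?_⟩
    rw [smul_add, hax r (Ideal.mul_le_left hr), hby r (Ideal.mul_le_right hr), add_zero]
  smul_mem' := by
    rintro c x ⟨a, ha, hax⟩
    exact ⟨a, ha, fun r hr => by rw [smul_comm, hax r hr, smul_zero]⟩

/-- The `(I,J)`-torsion functor `Γ_{I,J}`. -/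
def pairTorsionFunctor (I J : Ideal R) : ModuleCat.{0} R ⥤ ModuleCat.{0} R where
  obj M := ModuleCat.of R (pairTorsion I J M)
  map {M N} f := ModuleCat.ofHom (f.hom.restrict (p := pairTorsion I J M) (q := pairTorsion I J N)
    (fun x hx => by
      obtain ⟨a, ha, h⟩ := hx
      exact ⟨a, ha, fun r hr => by rw [← map_smul, h r hr, map_zero]⟩))
  map_id M := rfl
  map_comp f g := rfl

instance (I J : Ideal R) : (pairTorsionFunctor I J).Additive where
  map_add := rfl

/-- Local cohomology `H^i_{I,J}` with respect to the pair `(I,J)`, as the `i`-th right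
derived functor of `Γ_{I,J}`. -/
def pairLocalCohomology (I J : Ideal R) (i : ℕ) : ModuleCat.{0} R ⥤ ModuleCat.{0} R :=
  (pairTorsionFunctor I J).rightDerived i

/-- Ordinary local cohomology `H^i_a = H^i_{a,0}`. -/
def idealLocalCohomology (a : Ideal R) (i : ℕ) : ModuleCat.{0} R ⥤ ModuleCat.{0} R :=
  pairLocalCohomology a 0 i

/-- `Ext_R^i(N, M)` as an `R`-module. -/
def extGroup (i : ℕ) (N M : ModuleCat.{0} R) : ModuleCat.{0} R :=
  ((Ext R (ModuleCat.{0} R) i).obj (Opposite.op N)).obj M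

/-- A Serre subcategory of the category of `R`-modules, given by a predicate closed
under submodules, quotients and extensions. -/
structure SerreClass (R : Type) [CommRing R] where
  mem : ModuleCat.{0} R → Prop
  mem_of_injective : ∀ {M N : ModuleCat.{0} R} (f : M →ₗ[R] N),
    Function.Injective f → mem N → mem M
  mem_of_surjective : ∀ {M N : ModuleCat.{0} R} (f : M →ₗ[R] N),
    Function.Surjective f → mem M → mem N
  mem_of_exact : ∀ {M N K : ModuleCat.{0} R} (f : M →ₗ[R] N) (g : N →ₗ[R] K),
    Function.Injective f → Function.Surjective g → Function.Exact f g →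
    mem M → mem K → mem N

/-- `M` is `I`-torsion. -/
def IsTorsionWrt (I : Ideal R) (M : Type) [AddCommGroup M] [Module R M] : Prop :=
  ∀ x : M, ∃ n : ℕ, ∀ r ∈ I ^ n, r • x = 0

/-- A Melkersson subcategory with respect to `I`. -/
structure MelkerssonClass (R : Type) [CommRing R] (I : Ideal R) extends SerreClass R where
  mem_of_torsionBy : ∀ (M : ModuleCat.{0} R), IsTorsionWrt I M →
    mem (ModuleCat.of R (Submodule.torsionBySet R M (I : Set R))) → mem M

/-- `M` is an `(I,J)`-torsion module. -/
def IsPairTorsion (I J : Ideal R) (M : Type) [AddCommGroup M] [Module R M] : Prop :=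
  pairTorsion I J M = ⊤

/-- dim_R N ≤ k, via the Krull dimension of the support. -/
def moduleDimLE (R : Type) [CommRing R] (N : Type) [AddCommGroup N] [Module R N]
    (k : ℤ) : Prop :=
  Order.krullDim (Module.support R N) ≤ if k < 0 then ⊥ else ((k.toNat : ℕ∞) : WithBot ℕ∞)

/-!
`Supp(Rx) = V(ann x)`, so the claim is that `V(a) ⊆ W(I,J)` iff `a ∈ W̃(I,J)` (applied to
`a = ann x`, using that `W̃(I,J)` is closed upwards). If every prime containing `a` lies in
`W(I,J)`, then every prime containing `J + a` contains `I`, so `I ⊆ √(J + a)`, and since `I` is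
finitely generated some power of `I` lies in `J + a`.
-/

lemma mem_pairW_iff {I J : Ideal R} {p : PrimeSpectrum R} :
    p ∈ PairW I J ↔ p.asIdeal ∈ PairWTilde I J :=
  Iff.rfl

lemma PairWTilde.of_le {I J a b : Ideal R} (ha : a ∈ PairWTilde I J) (hab : a ≤ b) :
    b ∈ PairWTilde I J :=
  let ⟨t, ht, hIt⟩ := ha
  ⟨t, ht, hIt.trans (add_le_add_right hab J)⟩

theorem zeroLocus_subset_pairW_iff [IsNoetherianRing R] {I J a : Ideal R} :
    PrimeSpectrum.zeroLocus a ⊆ PairW I J ↔ a ∈ PairWTilde I J := by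
  refine ⟨fun h => ?_, fun ha _ hp => mem_pairW_iff.mpr (PairWTilde.of_le ha hp)⟩
  have hrad : I ≤ (J + a).radical := by
    rw [Ideal.radical_eq_sInf]
    refine le_sInf fun p ⟨hJap, hp⟩ => ?_
    obtain ⟨t, -, hIt⟩ : (⟨p, hp⟩ : PrimeSpectrum R) ∈ PairW I J :=
      h fun r hr => hJap (Ideal.mem_sup_right hr)
    have hJp : J + p = p := sup_eq_right.mpr (le_sup_left.trans hJap)
    exact hp.le_of_pow_le (hJp ▸ hIt)
  obtain ⟨n, hn⟩ := Ideal.exists_pow_le_of_le_radical_of_fg hrad (IsNoetherian.noetherian I)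
  exact ⟨n + 1, n.succ_pos, (Ideal.pow_le_pow_right n.le_succ).trans hn⟩

theorem exists_mem_pairWTilde_smul_eq_zero_iff {I J : Ideal R} {M : Type} [AddCommGroup M]
    [Module R M] {x : M} :
    (∃ a ∈ PairWTilde I J, ∀ r ∈ a, r • x = 0) ↔ (R ∙ x).annihilator ∈ PairWTilde I J := by
  simp_rw [← Submodule.mem_annihilator_span_singleton]
  exact ⟨fun ⟨a, ha, hax⟩ => PairWTilde.of_le ha hax, fun h => ⟨_, h, fun _ => id⟩⟩

/-- `Γ_{I,J}(M) = {x ∈ M : ∃ a ∈ W̃(I,J), a·x = 0}`. -/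
theorem stmt_0 (R : Type) [CommRing R] [IsNoetherianRing R] (I J : Ideal R)
    (M : Type) [AddCommGroup M] [Module R M] :
    {x : M | Module.support R ↥(Submodule.span R {x}) ⊆ PairW I J} =
    {x : M | ∃ a ∈ PairWTilde I J, ∀ r ∈ a, r • x = 0} := by
  ext x
  rw [Set.mem_ofPred, Set.mem_ofPred, exists_mem_pairWTilde_smul_eq_zero_iff,
    Module.support_eq_zeroLocus, zeroLocus_subset_pairW_iff]
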